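/- For any d at least the diameter of the connected query graph G_q, the total subgraph count C(G_q, G_t) equals the sum over all vertices v of the number of subsets S of the canonical neighborhood P(G_t, v, d) such that G_t[S] is isomorphic to G_q and max S = v. -/

import Mathlib

open SimpleGraph

/-- A graph homomorphism does not increase extended distance. -/
lemma aux_edist_le_of_hom {V W : Type*} {G : SimpleGraph V} {G' : SimpleGraph W}
    (f : G →g G') (u v : V) : G'.edist (f u) (f v) ≤ G.edist u v := by
  rcases eq_or_ne (G.edist u v) ⊤ with h | h
  · simp [h]
  · obtain ⟨p, hp⟩ := G.exists_walk_of_edist_ne_top h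
    calc G'.edist (f u) (f v) ≤ (p.map f).length := edist_le _
      _ = G.edist u v := by rw [Walk.length_map, hp]

lemma aux_ediam_ne_top {W : Type*} [Fintype W] (Gq : SimpleGraph W)
    (hconn : Gq.Connected) : Gq.ediam ≠ ⊤ := by
  have : Nonempty W := hconn.nonempty
  obtain ⟨u, v, huv⟩ := Gq.exists_edist_eq_ediam_of_finite
  rw [← huv]
  exact edist_ne_top_iff_reachable.mpr (hconn u v)

/-- The canonical neighborhood `P(Gt, v, d)`: vertices within (extended) distance `d` of `v`
whose index is at most that of `v`. -/
def canonicalNbhd {V : Type*} [LinearOrder V] (Gt : SimpleGraph V) (v : V) (d : ℕ) : Set V :=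
  {u : V | Gt.edist u v ≤ (d : ℕ∞) ∧ u ≤ v}

/-- For any `d` at least the diameter of the connected query graph `Gq`, the total
subgraph count of `Gq` in `Gt` equals the sum over all vertices `v` of the number of subsets `S`
of the canonical neighborhood `P(Gt, v, d)` such that `Gt[S] ≅ Gq` and `max S = v`. -/
theorem subgraph_count_eq_sum_canonicalNbhd_counts
    {V W : Type*} [Fintype V] [LinearOrder V] [Fintype W] [Nonempty W]
    (Gt : SimpleGraph V) (Gq : SimpleGraph W) (d : ℕ)
    (hconn : Gq.Connected) (hdiam : Gq.diam ≤ d) :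
    {S : Finset V | Nonempty (Gt.induce (S : Set V) ≃g Gq)}.ncard =
      ∑ v : V,
        {S : Finset V | (S : Set V) ⊆ canonicalNbhd Gt v d ∧
          Nonempty (Gt.induce (S : Set V) ≃g Gq) ∧ S.max = (v : WithBot V)}.ncard := by
  classical
  -- every `S` carrying a copy of `Gq` is nonempty
  have hne : ∀ S : Finset V, Nonempty (Gt.induce (S : Set V) ≃g Gq) → S.Nonempty := by
    rintro S ⟨e⟩
    obtain ⟨x, hx⟩ := e.symm (Classical.arbitrary W)
    exact ⟨x, hx⟩
  -- the diameter bound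
  have hed : Gq.ediam ≤ (d : ℕ∞) := by
    rw [← ENat.coe_toNat (aux_ediam_ne_top Gq hconn)]
    exact_mod_cast hdiam
  -- the subset condition is automatic
  have hsub : ∀ (v : V) (S : Finset V), Nonempty (Gt.induce (S : Set V) ≃g Gq) →
      S.max = (v : WithBot V) → (S : Set V) ⊆ canonicalNbhd Gt v d := by
    rintro v S ⟨e⟩ hmax u hu
    have hvS : v ∈ S := Finset.mem_of_max hmax
    have hvS' : v ∈ (S : Set V) := by simpa using hvS
    have hle : u ≤ v := by
      have := Finset.le_max (by simpa using hu)
      rw [hmax] at this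
      exact_mod_cast this
    refine ⟨?_, hle⟩
    have h1 : (Gt.induce (S : Set V)).edist ⟨u, hu⟩ ⟨v, hvS'⟩ ≤ (d : ℕ∞) := by
      have h := aux_edist_le_of_hom e.symm.toHom (e ⟨u, hu⟩) (e ⟨v, hvS'⟩)
      simp only [SetLike.coe_sort_coe, RelHom.coeFn_mk, RelIso.coe_fn_toEquiv, RelIso.symm_apply_apply] at h
      calc (Gt.induce (S : Set V)).edist ⟨u, hu⟩ ⟨v, hvS'⟩
          ≤ Gq.edist (e ⟨u, hu⟩) (e ⟨v, hvS'⟩) := by simpa using h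
        _ ≤ Gq.ediam := edist_le_ediam
        _ ≤ (d : ℕ∞) := hed
    have h2 := aux_edist_le_of_hom (Embedding.induce (G := Gt) (S : Set V)).toHom
      (⟨u, hu⟩ : (S : Set V)) ⟨v, hvS'⟩
    exact le_trans (by simpa using h2) h1
  -- counting
  rw [Set.ncard_eq_toFinset_card', Set.toFinset_setOf]
  have hmem : ∀ S ∈ Finset.univ.filter
      (fun S : Finset V => Nonempty (Gt.induce (S : Set V) ≃g Gq)),
      S.max ∈ Finset.univ.image (fun v : V => (v : WithBot V)) := by
    intro S hS
    rw [Finset.mem_filter] at hS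
    obtain ⟨x, hx⟩ := hne S hS.2
    obtain ⟨m, hm⟩ := Finset.max_of_mem hx
    rw [hm]
    exact Finset.mem_image_of_mem _ (Finset.mem_univ m)
  rw [Finset.card_eq_sum_card_fiberwise hmem,
    Finset.sum_image (by intro a _ b _ h; exact WithBot.coe_injective h)]
  refine Finset.sum_congr rfl fun v _ => ?_
  rw [Set.ncard_eq_toFinset_card', Set.toFinset_setOf, Finset.filter_filter]
  congr 1
  ext S
  simp only [Finset.mem_filter, Finset.mem_univ, true_and]
  constructor
  · rintro ⟨h1, h2⟩
    exact ⟨hsub v S h1 h2, h1, h2⟩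
  · rintro ⟨_, h1, h2⟩
    exact ⟨h1, h2⟩
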